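/- Soundness of the ZX rule (EU): the Hadamard matrix H = (1/√2)·[[1,1],[1,-1]] satisfies H = e^{-iπ/4} · Z(π/2) · X(π/2) · Z(π/2), where Z(α) = [[1,0],[0,e^{iα}]] is the green phase gate and X(α) = H·Z(α)·H; equivalently, Z(π/2) · X(π/2) · Z(π/2) = e^{iπ/4} · H. -/
import Mathlib

noncomputable def Hmat : Matrix (Fin 2) (Fin 2) ℂ :=
  (1 / (Real.sqrt 2 : ℂ)) • !![1,1;1,-1]

noncomputable def Zgate (α : ℝ) : Matrix (Fin 2) (Fin 2) ℂ :=
  !![1,0;0,Complex.exp (α * Complex.I)]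

noncomputable def Xgate (α : ℝ) : Matrix (Fin 2) (Fin 2) ℂ := Hmat * Zgate α * Hmat

theorem stmt1 :
    Zgate (Real.pi / 2) * Xgate (Real.pi / 2) * Zgate (Real.pi / 2)
      = Complex.exp ((Real.pi / 4 : ℝ) * Complex.I) • Hmat := by
  have h2 : (Real.sqrt 2 : ℂ) ≠ 0 :=
    Complex.ofReal_ne_zero.mpr (Real.sqrt_ne_zero'.mpr (by norm_num))
  have hsq : (Real.sqrt 2 : ℂ) * (Real.sqrt 2 : ℂ) = 2 := by
    rw [← Complex.ofReal_mul, Real.mul_self_sqrt (by norm_num)]; norm_num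
  have e1 : Complex.exp ((Real.pi/2 : ℝ) * Complex.I) = Complex.I := by
    push_cast
    rw [Complex.exp_mul_I]
    simp
  have e2 : Complex.exp ((Real.pi/4 : ℝ) * Complex.I) = (1 + Complex.I) / (Real.sqrt 2 : ℂ) := by
    rw [Complex.exp_mul_I, ← Complex.ofReal_cos, ← Complex.ofReal_sin,
      Real.cos_pi_div_four, Real.sin_pi_div_four]
    push_cast
    field_simp
    linear_combination (1 + Complex.I) * hsq
  unfold Xgate Zgate Hmat
  rw [e1, e2]
  ext i j
  fin_cases i <;> fin_cases j
  · simp [Matrix.mul_apply, Fin.sum_univ_two]; field_simp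
  · simp [Matrix.mul_apply, Fin.sum_univ_two]; field_simp
    linear_combination (-1) * Complex.I_sq
  · simp [Matrix.mul_apply, Fin.sum_univ_two]; field_simp
    linear_combination (-1) * Complex.I_sq
  · simp [Matrix.mul_apply, Fin.sum_univ_two]; field_simp
    linear_combination (1 + Complex.I) * Complex.I_sq
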